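/- arXiv:1110.3506 — 2 statements merged into one kernel-verified Lean document; each statement's English description precedes it below -/
import Mathlib

section
/- Let T be an ℝ-tree with a minimal, very small action of the free group F_N (N ≥ 2) by isometries. Then the action is mixing if and only if it has arc-dense directions. -/
open Pointwise MeasureTheory

noncomputable section

/-! ### The free group, its boundary, and the action on the boundary -/

/-- The free group of rank `N` with fixed basis `Fin N`. -/
abbrev FN (N : ℕ) := FreeGroup (Fin N)

/-- A letter: a basis element together with a sign (`true` = positive). -/
abbrev Letter (N : ℕ) := Fin N × Bool

/-- An infinite word is reduced if no letter is followed by its inverse. -/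
def IsReducedWord {N : ℕ} (X : ℕ → Letter N) : Prop :=
  ∀ n, X (n + 1) ≠ ((X n).1, !(X n).2)

/-- The Gromov boundary `∂F_N`: infinite reduced words in the basis and its inverses,
topologized as a subspace of the product. -/
abbrev Bd (N : ℕ) := {X : ℕ → Letter N // IsReducedWord X}

/-- Prepend a letter to an infinite word, performing the (single possible) cancellation. -/
def consWord {N : ℕ} (l : Letter N) (X : ℕ → Letter N) : ℕ → Letter N
  | 0 => l
  | n + 1 => X n

def prependLetter {N : ℕ} (l : Letter N) (X : ℕ → Letter N) : ℕ → Letter N :=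
  if X 0 = (l.1, !l.2) then fun n => X (n + 1) else consWord l X

lemma prependLetter_reduced {N : ℕ} (l : Letter N) {X : ℕ → Letter N}
    (hX : IsReducedWord X) : IsReducedWord (prependLetter l X) := by
  unfold prependLetter
  split_ifs with h
  · intro n
    exact hX (n + 1)
  · intro n
    cases n with
    | zero => exact h
    | succ m => exact hX m

lemma prependLetter_injOn {N : ℕ} (l : Letter N) {X Y : ℕ → Letter N}
    (hX : IsReducedWord X) (hY : IsReducedWord Y)
    (h : prependLetter l X = prependLetter l Y) : X = Y := by
  unfold prependLetter at h
  split_ifs at h with h1 h2 h2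
  · funext n
    cases n with
    | zero => rw [h1, h2]
    | succ m => exact congrFun h m
  · exfalso
    have h0 : X 1 = l := congrFun h 0
    have hr := hX 0
    rw [h1] at hr
    simp only [Bool.not_not] at hr
    exact hr (by rw [h0])
  · exfalso
    have h0 : Y 1 = l := (congrFun h 0).symm
    have hr := hY 0
    rw [h2] at hr
    simp only [Bool.not_not] at hr
    exact hr (by rw [h0])
  · funext n
    exact congrFun h (n + 1)

/-- Act on an infinite reduced word by a finite word (a list of letters),
multiplying on the left and reducing. -/
def wordActFun {N : ℕ} (w : List (Letter N)) (X : ℕ → Letter N) : ℕ → Letter N :=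
  w.foldr prependLetter X

lemma wordActFun_reduced {N : ℕ} (w : List (Letter N)) {X : ℕ → Letter N}
    (hX : IsReducedWord X) : IsReducedWord (wordActFun w X) := by
  induction w with
  | nil => exact hX
  | cons l w ih => exact prependLetter_reduced l ih

lemma wordActFun_injOn {N : ℕ} (w : List (Letter N)) {X Y : ℕ → Letter N}
    (hX : IsReducedWord X) (hY : IsReducedWord Y)
    (h : wordActFun w X = wordActFun w Y) : X = Y := by
  induction w with
  | nil => exact h
  | cons l w ih =>
      exact ih (prependLetter_injOn l (wordActFun_reduced w hX) (wordActFun_reduced w hY) h)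

/-- The action of `F_N` on its boundary: left multiplication followed by reduction. -/
def bAct {N : ℕ} (g : FN N) (X : Bd N) : Bd N :=
  ⟨wordActFun (FreeGroup.toWord g) X.1, wordActFun_reduced _ X.2⟩

lemma bAct_injective {N : ℕ} (g : FN N) : Function.Injective (bAct (N := N) g) := by
  intro X Y h
  exact Subtype.ext (wordActFun_injOn _ X.2 Y.2 (congrArg Subtype.val h))

/-- The diagonal action of `F_N` on `∂F_N × ∂F_N`. -/
def leafAct {N : ℕ} (g : FN N) (p : Bd N × Bd N) : Bd N × Bd N :=
  (bAct g p.1, bAct g p.2)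

/-- `X` is the limit in `∂F_N` of the reduced words of `g ^ n` as `n → ∞`. -/
def limitsTo {N : ℕ} (g : FN N) (X : Bd N) : Prop :=
  ∀ k : ℕ, ∃ n₀ : ℕ, ∀ n ≥ n₀, ∀ i < k, (FreeGroup.toWord (g ^ n))[i]? = some (X.1 i)

/-! ### Laminations -/

/-- A lamination: a non-empty, closed (in `∂²F_N`, i.e. relatively closed in the
complement of the diagonal), `F_N`-invariant and flip-invariant set of pairs of
distinct boundary points. -/
def IsLamination {N : ℕ} (L : Set (Bd N × Bd N)) : Prop :=
  L.Nonempty ∧ (∀ p ∈ L, p.1 ≠ p.2) ∧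
  (∃ C : Set (Bd N × Bd N), IsClosed C ∧ L = C ∩ {p | p.1 ≠ p.2}) ∧
  (∀ g : FN N, ∀ p ∈ L, leafAct g p ∈ L) ∧
  (∀ p ∈ L, (p.2, p.1) ∈ L)

/-- A minimal lamination: one containing no proper sublamination. -/
def IsMinimalLamination {N : ℕ} (L : Set (Bd N × Bd N)) : Prop :=
  IsLamination L ∧ ∀ L' : Set (Bd N × Bd N), IsLamination L' → L' ⊆ L → L' = L

/-- The derived set of a set of leaves: its non-isolated points. -/
def derivedOf {N : ℕ} (L : Set (Bd N × Bd N)) : Set (Bd N × Bd N) :=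
  {p ∈ L | p ∈ closure (L \ {p})}

/-- A leaf `l` is diagonal over `L0` if `l = (X_1, X_n)` for a finite chain of leaves
`(X_1, X_2), (X_2, X_3), …, (X_{n-1}, X_n)` in `L0`. -/
def IsDiagonalOver {N : ℕ} (L0 : Set (Bd N × Bd N)) (l : Bd N × Bd N) : Prop :=
  ∃ (n : ℕ) (X : Fin (n + 2) → Bd N),
    l = (X 0, X (Fin.last (n + 1))) ∧
    ∀ i : Fin (n + 1), (X i.castSucc, X i.succ) ∈ L0

/-- The `F_N`-orbit of a leaf. -/
def leafOrbit {N : ℕ} (p : Bd N × Bd N) : Set (Bd N × Bd N) :=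
  {q | ∃ g : FN N, q = leafAct g p}

/-- A lamination `L` is minimal up to diagonal leaves if it contains a unique minimal
sublamination `L0`, and `L \ L0` consists of finitely many `F_N`-orbits of leaves,
each of which is diagonal over `L0`. -/
def IsMinimalUpToDiagonal {N : ℕ} (L : Set (Bd N × Bd N)) : Prop :=
  ∃ L0 : Set (Bd N × Bd N),
    (IsMinimalLamination L0 ∧ L0 ⊆ L) ∧
    (∀ L1 : Set (Bd N × Bd N), IsMinimalLamination L1 → L1 ⊆ L → L1 = L0) ∧
    (∃ P : Set (Bd N × Bd N), P.Finite ∧ L \ L0 = ⋃ p ∈ P, leafOrbit p) ∧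
    (∀ l ∈ L \ L0, IsDiagonalOver L0 l)

/-! ### ℝ-trees and actions on them -/

/-- The metric segment between two points; in an ℝ-tree this is the unique arc
joining them. -/
def seg {T : Type*} [MetricSpace T] (x y : T) : Set T :=
  {z | dist x z + dist z y = dist x y}

/-- An ℝ-tree: any two points are joined by an arc isometric to a real interval,
and topological arcs between two given points are unique. -/
structure IsRTree (T : Type*) [MetricSpace T] : Prop where
  geodesic : ∀ x y : T, ∃ f : ℝ → T, f 0 = x ∧ f (dist x y) = y ∧
    ∀ s ∈ Set.Icc (0 : ℝ) (dist x y), ∀ t ∈ Set.Icc (0 : ℝ) (dist x y),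
      dist (f s) (f t) = |s - t|
  unique_arc : ∀ x y : T, x ≠ y → ∀ f g : ℝ → T,
    ContinuousOn f (Set.Icc (0 : ℝ) 1) → Set.InjOn f (Set.Icc (0 : ℝ) 1) →
    ContinuousOn g (Set.Icc (0 : ℝ) 1) → Set.InjOn g (Set.Icc (0 : ℝ) 1) →
    f 0 = x → f 1 = y → g 0 = x → g 1 = y →
    f '' Set.Icc (0 : ℝ) 1 = g '' Set.Icc (0 : ℝ) 1

/-- A non-degenerate segment (arc) of `T`. -/
def IsNondegSeg {T : Type*} [MetricSpace T] (I : Set T) : Prop :=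
  ∃ x y : T, x ≠ y ∧ I = seg x y

/-- A subtree: a non-empty convex subset. -/
def IsSubtree {T : Type*} [MetricSpace T] (S : Set T) : Prop :=
  S.Nonempty ∧ ∀ x ∈ S, ∀ y ∈ S, seg x y ⊆ S

section TreeAction

variable (N : ℕ) (T : Type*) [MetricSpace T] [MulAction (FN N) T]

/-- The action is by isometries. -/
def IsIsometricAction : Prop :=
  ∀ g : FN N, Isometry (fun x : T => g • x)

/-- The translation length of `g`. -/
def translationLength (g : FN N) : ℝ :=
  ⨅ x : T, dist x (g • x)

/-- The action is free: every non-trivial element has positive translation length. -/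
def IsFreeAction : Prop :=
  ∀ g : FN N, g ≠ 1 → 0 < translationLength N T g

/-- Minimality: `T` has no non-empty proper invariant subtree. -/
def IsMinimalAction : Prop :=
  ∀ S : Set T, S.Nonempty → (∀ x ∈ S, ∀ y ∈ S, seg x y ⊆ S) →
    (∀ g : FN N, ∀ x ∈ S, g • x ∈ S) → S = Set.univ

/-- Dense orbits. -/
def HasDenseOrbits : Prop :=
  ∀ x : T, Dense (MulAction.orbit (FN N) x)

/-- Mixing. -/
def IsMixing : Prop :=
  ∀ I J : Set T, IsNondegSeg I → IsNondegSeg J →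
    ∃ (n : ℕ) (u : Fin (n + 1) → FN N), I ⊆ ⋃ i, u i • J

/-- Indecomposability. -/
def IsIndecomposable : Prop :=
  ∀ I J : Set T, IsNondegSeg I → IsNondegSeg J →
    ∃ (n : ℕ) (u : Fin (n + 1) → FN N),
      (I ⊆ ⋃ i, u i • J) ∧
      ∀ i : Fin n, IsNondegSeg (u i.castSucc • J ∩ u i.succ • J)

/-- The action has arc-dense directions. -/
def HasArcDenseDirections : Prop :=
  ∀ x y : T, y ≠ x → ∀ I : Set T, IsNondegSeg I →
    ∃ g : FN N, g • x ∈ I ∧ (g • connectedComponentIn {x}ᶜ y ∩ I).Nontrivial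

/-- A transverse family for the action. -/
def IsTransverseFamily (𝒯 : Set (Set T)) : Prop :=
  𝒯.Nonempty ∧
  (∀ S ∈ 𝒯, IsSubtree S ∧ S.Nontrivial ∧ S ≠ Set.univ) ∧
  (∀ g : FN N, ∀ S ∈ 𝒯, g • S ∈ 𝒯) ∧
  (∀ S ∈ 𝒯, ∀ S' ∈ 𝒯, S ≠ S' → (S ∩ S').Subsingleton)

/-- Leaves `(g^{-∞}, g^{∞})` of elements of translation length `< ε`. -/
def smallLeaves (ε : ℝ) : Set (Bd N × Bd N) :=
  {p | ∃ g : FN N, g ≠ 1 ∧ translationLength N T g < ε ∧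
    limitsTo g⁻¹ p.1 ∧ limitsTo g p.2}

/-- The dual lamination `L(T)` of a tree with dense orbits. -/
def dualLamination : Set (Bd N × Bd N) :=
  {p | p.1 ≠ p.2} ∩ ⋂ ε ∈ Set.Ioi (0 : ℝ), closure (smallLeaves N T ε)

/-- A maximal cyclic subgroup. -/
def IsMaximalCyclic {G : Type*} [Group G] (H : Subgroup G) : Prop :=
  (∃ g : G, H = Subgroup.zpowers g) ∧
  ∀ g : G, H ≤ Subgroup.zpowers g → H = Subgroup.zpowers g

/-- A very small action: minimal, stabilizers of non-degenerate arcs are trivial or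
maximal cyclic, and stabilizers of tripods are trivial. -/
def IsVerySmallAction : Prop :=
  IsMinimalAction N T ∧
  (∀ I : Set T, IsNondegSeg I →
    MulAction.stabilizer (FN N) I = ⊥ ∨ IsMaximalCyclic (MulAction.stabilizer (FN N) I)) ∧
  (∀ x y z : T, x ∉ seg y z → y ∉ seg x z → z ∉ seg x y →
    MulAction.stabilizer (FN N) (seg x y ∪ seg y z ∪ seg z x) = ⊥)

/-- The set of directions at a point: connected components of `T ∖ {x}`. -/
def directionsAt (x : T) : Set (Set T) :=
  {d | ∃ y : T, y ≠ x ∧ d = connectedComponentIn {x}ᶜ y}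

/-- The set of `Stab(x)`-orbits of directions at `x`. -/
def dirOrbitsAt (x : T) : Set (Set (Set T)) :=
  {D | ∃ d ∈ directionsAt T x,
    D = {d' | ∃ g ∈ MulAction.stabilizer (FN N) x, d' = g • d}}

end TreeAction

/-- The rank of a subgroup: the minimal size of a finite generating set. -/
def subgroupRank {G : Type*} [Group G] (H : Subgroup G) : ℕ :=
  sInf {n | ∃ s : Finset G, s.card = n ∧ Subgroup.closure (s : Set G) = H}

/-! ### Free factors and boundaries of subgroups -/

/-- `H` is a free factor of `F_N`: there is `K` such that the natural map
`H ∗ K → F_N` is an isomorphism. -/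
def IsFreeFactor {N : ℕ} (H : Subgroup (FN N)) : Prop :=
  ∃ K : Subgroup (FN N),
    Function.Bijective (Monoid.Coprod.lift H.subtype K.subtype)

/-- The boundary `∂H ⊆ ∂F_N` of a subgroup `H`: points `X` such that elements of `H`
have arbitrarily long common prefixes with `X`. -/
def boundaryOf {N : ℕ} (H : Subgroup (FN N)) : Set (Bd N) :=
  {X | ∀ k : ℕ, ∃ h ∈ H, ∀ i < k, (FreeGroup.toWord h)[i]? = some (X.1 i)}

/-- A leaf is carried by `H` if both its endpoints lie in `∂H`. -/
def IsCarriedBy {N : ℕ} (H : Subgroup (FN N)) (p : Bd N × Bd N) : Prop :=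
  p.1 ∈ boundaryOf H ∧ p.2 ∈ boundaryOf H

/-! ### Currents -/

/-- `∂²F_N`, as a type. -/
abbrev DBd (N : ℕ) := {p : Bd N × Bd N // p.1 ≠ p.2}

instance (N : ℕ) : MeasurableSpace (DBd N) := borel _

instance (N : ℕ) : BorelSpace (DBd N) := ⟨rfl⟩

/-- The flip on `∂²F_N`. -/
def dbFlip {N : ℕ} (p : DBd N) : DBd N :=
  ⟨(p.1.2, p.1.1), fun h => p.2 h.symm⟩

/-- The `F_N`-action on `∂²F_N`. -/
def dbAct {N : ℕ} (g : FN N) (p : DBd N) : DBd N :=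
  ⟨(bAct g p.1.1, bAct g p.1.2), fun h => p.2 (bAct_injective g h)⟩

/-- The topological support of a measure. -/
def measSupport {X : Type*} [TopologicalSpace X] [MeasurableSpace X]
    (μ : Measure X) : Set X :=
  {x | ∀ U : Set X, IsOpen U → x ∈ U → μ U ≠ 0}

end


/-! Mixing gives arc-dense directions: cover a short initial piece of the direction `d` at `x` by
finitely many translates of `I`. Those missing `x` are closed, hence miss a ball around `x`, so the
infinitely many points of `d` near `x` fall into the finitely many translates through `x`, and one
of them, `g I`, contains two of them; `g⁻¹` is the required element.

Conversely, at a point `p` of an arc `I`, arc-density applied to the (at most two) directions at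
`p` meeting `I` covers a neighbourhood of `p` in `I` by two translates of `J`, because in an ℝ-tree
a direction at `p` is determined by the germ at `p` of any segment issuing into it. Compactness of
`I` then gives mixing. The ℝ-tree input is that segments are the only arcs, which yields medians,
0-hyperbolicity of the Gromov product and hence this description of directions. -/

open Set Metric

section Segments

variable {T : Type*} [MetricSpace T]

lemma left_mem_seg (x y : T) : x ∈ seg x y := by simp [seg]

lemma right_mem_seg (x y : T) : y ∈ seg x y := by simp [seg]

lemma seg_comm (x y : T) : seg x y = seg y x := by
  ext z
  simp only [seg, mem_ofPred_eq, dist_comm x, dist_comm _ y, add_comm]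

lemma isClosed_seg (x y : T) : IsClosed (seg x y) :=
  isClosed_eq ((continuous_const.dist continuous_id).add (continuous_id.dist continuous_const))
    continuous_const

lemma seg_subset_seg_left {x y z : T} (hz : z ∈ seg x y) : seg x z ⊆ seg x y := by
  intro w hw
  simp only [seg, mem_ofPred_eq] at *
  linarith [dist_triangle w z y, dist_triangle x w y]

end Segments

section Concat

variable {X : Type*} {f g : ℝ → X} {a b c : ℝ}

lemma continuousOn_piecewise_Iic [TopologicalSpace X] (hf : ContinuousOn f (Icc a b))
    (hg : ContinuousOn g (Icc b c)) (hfg : f b = g b) :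
    ContinuousOn ((Iic b).piecewise f g) (Icc a c) := by
  refine ContinuousOn.mono ?_ (Icc_subset_Icc_union_Icc (b := b))
  refine ContinuousOn.union_of_isClosed ?_ ?_ isClosed_Icc isClosed_Icc
  · exact hf.congr fun t ht => piecewise_eq_of_mem _ _ _ ht.2
  · refine hg.congr fun t ht => ?_
    rcases ht.1.eq_or_lt with rfl | hbt
    · simp [hfg]
    · exact piecewise_eq_of_notMem _ _ _ hbt.not_ge

lemma injOn_piecewise_Iic (hf : InjOn f (Icc a b)) (hg : InjOn g (Icc b c))
    (hfg : ∀ s ∈ Icc a b, ∀ t ∈ Icc b c, f s = g t → s = b ∧ t = b) :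
    InjOn ((Iic b).piecewise f g) (Icc a c) := by
  intro s hs t ht hst
  by_cases hsb : s ≤ b <;> by_cases htb : t ≤ b <;>
    simp only [piecewise, mem_Iic, hsb, htb, if_true, if_false] at hst
  · exact hf ⟨hs.1, hsb⟩ ⟨ht.1, htb⟩ hst
  · exact absurd (hfg s ⟨hs.1, hsb⟩ t ⟨le_of_not_ge htb, ht.2⟩ hst).2
      (by linarith [not_le.1 htb])
  · exact absurd (hfg t ⟨ht.1, htb⟩ s ⟨le_of_not_ge hsb, hs.2⟩ hst.symm).2
      (by linarith [not_le.1 hsb])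
  · exact hg ⟨le_of_not_ge hsb, hs.2⟩ ⟨le_of_not_ge htb, ht.2⟩ hst

lemma exists_reparam_Icc_zero_one [TopologicalSpace X] (hab : a < b)
    (hf : ContinuousOn f (Icc a b)) (hf' : InjOn f (Icc a b)) :
    ∃ F : ℝ → X, ContinuousOn F (Icc 0 1) ∧ InjOn F (Icc 0 1) ∧ F 0 = f a ∧
      F 1 = f b ∧ F '' Icc 0 1 = f '' Icc a b := by
  have himage : AffineMap.lineMap a b '' Icc (0 : ℝ) 1 = Icc a b := by
    rw [← segment_eq_image_lineMap, segment_eq_Icc hab.le]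
  refine ⟨f ∘ AffineMap.lineMap a b, ?_, ?_, by simp, by simp, by rw [image_comp, himage]⟩
  · exact hf.comp (AffineMap.lineMap_continuous).continuousOn
      fun t ht => himage ▸ mem_image_of_mem _ ht
  · exact hf'.comp (AffineMap.lineMap_injective ℝ hab.ne).injOn
      fun t ht => himage ▸ mem_image_of_mem _ ht

end Concat

section Geodesic

variable {T : Type*} [MetricSpace T]

def IsGeodesicOn (f : ℝ → T) (s : Set ℝ) : Prop :=
  ∀ a ∈ s, ∀ b ∈ s, dist (f a) (f b) = dist a b

namespace IsGeodesicOn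

variable {f : ℝ → T} {s : Set ℝ} {a b t : ℝ}

lemma mono (hf : IsGeodesicOn f s) {s' : Set ℝ} (hs' : s' ⊆ s) : IsGeodesicOn f s' :=
  fun a ha b hb => hf a (hs' ha) b (hs' hb)

lemma isometry_domRestrict (hf : IsGeodesicOn f s) : Isometry (s.domRestrict f) :=
  Isometry.of_dist_eq fun a b => hf a a.2 b b.2

lemma continuousOn (hf : IsGeodesicOn f s) : ContinuousOn f s :=
  continuousOn_iff_continuous_domRestrict.2 hf.isometry_domRestrict.continuous

lemma injOn (hf : IsGeodesicOn f s) : InjOn f s :=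
  injOn_iff_injective.2 hf.isometry_domRestrict.injective

lemma dist_eq_sub (hf : IsGeodesicOn f s) (ha : a ∈ s) (hb : b ∈ s) (hab : a ≤ b) :
    dist (f a) (f b) = b - a := by
  rw [hf a ha b hb, Real.dist_eq, abs_of_nonpos (by linarith)]
  ring

lemma apply_mem_seg (hf : IsGeodesicOn f (Icc a b)) (ht : t ∈ Icc a b) :
    f t ∈ seg (f a) (f b) := by
  have hab : a ≤ b := ht.1.trans ht.2
  show dist (f a) (f t) + dist (f t) (f b) = dist (f a) (f b)
  rw [hf.dist_eq_sub (left_mem_Icc.2 hab) ht ht.1, hf.dist_eq_sub ht (right_mem_Icc.2 hab) ht.2,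
    hf.dist_eq_sub (left_mem_Icc.2 hab) (right_mem_Icc.2 hab) hab]
  ring

lemma image_Ioc_subset_connectedComponentIn (hf : IsGeodesicOn f (Icc a b)) (hab : a < b) :
    f '' Ioc a b ⊆ connectedComponentIn {f a}ᶜ (f b) := by
  refine (isPreconnected_Ioc.image f (hf.continuousOn.mono Ioc_subset_Icc_self))
    |>.subset_connectedComponentIn (mem_image_of_mem f (right_mem_Ioc.2 hab)) ?_
  rintro _ ⟨t, ht, rfl⟩ hta
  exact ht.1.ne' (hf.injOn (Ioc_subset_Icc_self ht) (left_mem_Icc.2 hab.le) hta)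

end IsGeodesicOn

lemma IsRTree.exists_isGeodesicOn (htree : IsRTree T) (x y : T) (a : ℝ) :
    ∃ f : ℝ → T, IsGeodesicOn f (Icc a (a + dist x y)) ∧ f a = x ∧
      f (a + dist x y) = y := by
  obtain ⟨f, hx, hy, hf⟩ := htree.geodesic x y
  refine ⟨fun t => f (t - a), fun s hs t ht => ?_, by simpa using hx, by simpa using hy⟩
  rw [hf (s - a) ⟨by linarith [hs.1], by linarith [hs.2]⟩
    (t - a) ⟨by linarith [ht.1], by linarith [ht.2]⟩,
    Real.dist_eq, sub_sub_sub_cancel_right]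

end Geodesic

namespace IsRTree

variable {T : Type*} [MetricSpace T] (htree : IsRTree T)
include htree

lemma image_eq_of_injOn {f g : ℝ → T} {a b c d : ℝ} (hab : a < b) (hcd : c < d)
    (hf : ContinuousOn f (Icc a b)) (hf' : InjOn f (Icc a b))
    (hg : ContinuousOn g (Icc c d)) (hg' : InjOn g (Icc c d))
    (h₀ : f a = g c) (h₁ : f b = g d) : f '' Icc a b = g '' Icc c d := by
  obtain ⟨F, hF, hF', hF0, hF1, hFim⟩ := exists_reparam_Icc_zero_one hab hf hf'
  obtain ⟨G, hG, hG', hG0, hG1, hGim⟩ := exists_reparam_Icc_zero_one hcd hg hg'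
  have hne : f a ≠ f b := fun h =>
    hab.ne (hf' (left_mem_Icc.2 hab.le) (right_mem_Icc.2 hab.le) h)
  rw [← hFim, ← hGim]
  exact htree.unique_arc _ _ hne F G hF hF' hG hG' hF0 hF1 (hG0.trans h₀.symm)
    (hG1.trans h₁.symm)

/-- The concatenation of `φ₁` and `φ₂` is an arc, so by uniqueness of arcs it has the same image
as `f`. -/
lemma apply_mem_image_of_concat {φ₁ φ₂ f : ℝ → T} {a m b c d : ℝ}
    (ham : a ≤ m) (hmb : m ≤ b) (hab : a < b) (hcd : c < d)
    (hφ₁ : IsGeodesicOn φ₁ (Icc a m)) (hφ₂ : IsGeodesicOn φ₂ (Icc m b))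
    (hm : φ₁ m = φ₂ m)
    (hcross : ∀ s ∈ Icc a m, ∀ t ∈ Icc m b, φ₁ s = φ₂ t → s = m ∧ t = m)
    (hf : IsGeodesicOn f (Icc c d)) (h₀ : f c = φ₁ a) (h₁ : f d = φ₂ b) :
    φ₁ m ∈ f '' Icc c d := by
  have h₀' : (Iic m).piecewise φ₁ φ₂ a = φ₁ a := piecewise_eq_of_mem _ _ _ ham
  have h₁' : (Iic m).piecewise φ₁ φ₂ b = φ₂ b := by
    rcases hmb.eq_or_lt with rfl | hmb
    · simp [hm]
    · exact piecewise_eq_of_notMem _ _ _ hmb.not_ge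
  rw [← htree.image_eq_of_injOn hab hcd (continuousOn_piecewise_Iic hφ₁.continuousOn
    hφ₂.continuousOn hm) (injOn_piecewise_Iic hφ₁.injOn hφ₂.injOn hcross) hf.continuousOn
    hf.injOn (h₀'.trans h₀.symm) (h₁'.trans h₁.symm)]
  exact ⟨m, ⟨ham, hmb⟩, piecewise_eq_of_mem _ _ _ (mem_Iic.2 le_rfl)⟩

lemma seg_eq_image {f : ℝ → T} {a b : ℝ} (hf : IsGeodesicOn f (Icc a b)) (hab : a ≤ b) :
    seg (f a) (f b) = f '' Icc a b := by
  refine Subset.antisymm (fun z hz => ?_) (image_subset_iff.2 fun t ht => hf.apply_mem_seg ht)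
  rcases eq_or_ne z (f a) with rfl | hza
  · exact mem_image_of_mem f (left_mem_Icc.2 hab)
  rcases eq_or_ne z (f b) with rfl | hzb
  · exact mem_image_of_mem f (right_mem_Icc.2 hab)
  have hz' : dist (f a) z + dist z (f b) = b - a :=
    hz.trans (hf.dist_eq_sub (left_mem_Icc.2 hab) (right_mem_Icc.2 hab) hab)
  have hd₁ : 0 < dist (f a) z := dist_pos.2 hza.symm
  have hd₂ : 0 < dist z (f b) := dist_pos.2 hzb
  obtain ⟨φ₁, hφ₁, hφ₁a, hφ₁z⟩ := htree.exists_isGeodesicOn (f a) z a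
  obtain ⟨φ₂, hφ₂, hφ₂z, hφ₂b⟩ :=
    htree.exists_isGeodesicOn z (f b) (a + dist (f a) z)
  have hb : a + dist (f a) z + dist z (f b) = b := by linarith
  rw [hb] at hφ₂ hφ₂b
  rw [← hφ₁z]
  refine htree.apply_mem_image_of_concat (by linarith) (by linarith) (by linarith)
    (by linarith) hφ₁ hφ₂ (hφ₁z.trans hφ₂z.symm) (fun s hs t ht hst => ?_) hf hφ₁a.symm hφ₂b.symm
  -- the path `f a → φ₁ s = φ₂ t → f b` has length `(s - a) + (b - t)`
  have := dist_triangle (f a) (φ₁ s) (f b)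
  rw [← hφ₁a, hφ₁.dist_eq_sub (left_mem_Icc.2 (by linarith)) hs hs.1, hst, ← hφ₂b,
    hφ₂.dist_eq_sub ht (right_mem_Icc.2 (by linarith)) ht.2, hφ₁a, hφ₂b,
    hf.dist_eq_sub (left_mem_Icc.2 hab) (right_mem_Icc.2 hab) hab] at this
  constructor <;> linarith [hs.2, ht.1]

lemma exists_seg_eq_image (x y : T) :
    ∃ f : ℝ → T, IsGeodesicOn f (Icc 0 (dist x y)) ∧ f 0 = x ∧ f (dist x y) = y ∧
      seg x y = f '' Icc 0 (dist x y) := by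
  obtain ⟨f, hf, hx, hy⟩ := htree.exists_isGeodesicOn x y 0
  rw [zero_add] at hf hy
  exact ⟨f, hf, hx, hy, by rw [← htree.seg_eq_image hf dist_nonneg, hx, hy]⟩

lemma seg_apply_eq_image_uIcc {f : ℝ → T} {a b s t : ℝ} (hf : IsGeodesicOn f (Icc a b))
    (hs : s ∈ Icc a b) (ht : t ∈ Icc a b) : seg (f s) (f t) = f '' uIcc s t := by
  rcases le_total s t with hst | hts
  · rw [uIcc_of_le hst, htree.seg_eq_image (hf.mono (Icc_subset_Icc hs.1 ht.2)) hst]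
  · rw [uIcc_of_ge hts, seg_comm, htree.seg_eq_image (hf.mono (Icc_subset_Icc ht.1 hs.2)) hts]

lemma isCompact_seg (x y : T) : IsCompact (seg x y) := by
  obtain ⟨f, hf, -, -, hseg⟩ := htree.exists_seg_eq_image x y
  exact hseg ▸ isCompact_Icc.image_of_continuousOn hf.continuousOn

lemma seg_subset_seg {x y z₁ z₂ : T} (h₁ : z₁ ∈ seg x y) (h₂ : z₂ ∈ seg x y) :
    seg z₁ z₂ ⊆ seg x y := by
  obtain ⟨f, hf, -, -, hseg⟩ := htree.exists_seg_eq_image x y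
  rw [hseg] at h₁ h₂ ⊢
  obtain ⟨t₁, ht₁, rfl⟩ := h₁
  obtain ⟨t₂, ht₂, rfl⟩ := h₂
  rw [htree.seg_apply_eq_image_uIcc hf ht₁ ht₂]
  exact image_mono (uIcc_subset_Icc ht₁ ht₂)

lemma seg_subset_union {x y z : T} (hz : z ∈ seg x y) : seg x y ⊆ seg x z ∪ seg z y := by
  obtain ⟨f, hf, hx, hy, hseg⟩ := htree.exists_seg_eq_image x y
  rw [hseg] at hz ⊢
  obtain ⟨t, ht, rfl⟩ := hz
  have h0 : (0 : ℝ) ∈ Icc 0 (dist x y) := left_mem_Icc.2 dist_nonneg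
  have hD : dist x y ∈ Icc 0 (dist x y) := right_mem_Icc.2 dist_nonneg
  have hxt := htree.seg_apply_eq_image_uIcc hf h0 ht
  have hty := htree.seg_apply_eq_image_uIcc hf ht hD
  rw [hx, uIcc_of_le ht.1] at hxt
  rw [hy, uIcc_of_le ht.2] at hty
  rw [hxt, hty, ← image_union, Icc_union_Icc_eq_Icc ht.1 ht.2]

lemma mem_seg_of_dist_le {p w z₁ z₂ : T} (h₁ : z₁ ∈ seg p w) (h₂ : z₂ ∈ seg p w)
    (hd : dist p z₁ ≤ dist p z₂) : z₁ ∈ seg p z₂ := by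
  obtain ⟨f, hf, hp, -, hseg⟩ := htree.exists_seg_eq_image p w
  rw [hseg] at h₁ h₂
  obtain ⟨t₁, ht₁, rfl⟩ := h₁
  obtain ⟨t₂, ht₂, rfl⟩ := h₂
  have h0 : (0 : ℝ) ∈ Icc 0 (dist p w) := left_mem_Icc.2 dist_nonneg
  rw [← hp, hf.dist_eq_sub h0 ht₁ ht₁.1, hf.dist_eq_sub h0 ht₂ ht₂.1, sub_zero,
    sub_zero] at hd
  rw [← hp, htree.seg_apply_eq_image_uIcc hf h0 ht₂, uIcc_of_le ht₂.1]
  exact mem_image_of_mem f ⟨ht₁.1, hd⟩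

lemma exists_median (a b c : T) : ∃ m, m ∈ seg a b ∧ m ∈ seg a c ∧ m ∈ seg b c := by
  rcases eq_or_ne a b with rfl | hab
  · exact ⟨a, left_mem_seg a a, left_mem_seg a c, left_mem_seg a c⟩
  obtain ⟨f, hf, ha, hc, -⟩ := htree.exists_seg_eq_image a c
  -- the median is the first point of the geodesic from `a` to `c` that lies on `seg b c`
  set W := Icc 0 (dist a c) ∩ f ⁻¹' seg b c
  have hW : IsClosed W :=
    hf.continuousOn.preimage_isClosed_of_isClosed isClosed_Icc (isClosed_seg b c)
  have hcW : dist a c ∈ W :=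
    ⟨right_mem_Icc.2 dist_nonneg, by simp only [mem_preimage, hc, right_mem_seg]⟩
  have hσ : sInf W ∈ W := hW.csInf_mem ⟨_, hcW⟩ ⟨0, fun t ht => ht.1.1⟩
  set σ := sInf W
  refine ⟨f σ, ?_, ha ▸ hc ▸ hf.apply_mem_seg hσ.1, hσ.2⟩
  obtain ⟨φ, hφ, hφm, hφb⟩ := htree.exists_isGeodesicOn (f σ) b σ
  obtain ⟨ψ, hψ, hψa, hψb, hseg⟩ := htree.exists_seg_eq_image a b
  have hσ0 : 0 ≤ σ := hσ.1.1
  have hlen : 0 < σ + dist (f σ) b := by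
    rcases hσ0.eq_or_lt with h | h
    · rw [← h, ha, zero_add]
      exact dist_pos.2 hab
    · linarith [dist_nonneg (x := f σ) (y := b)]
  rw [hseg]
  refine htree.apply_mem_image_of_concat hσ0 (le_add_of_nonneg_right dist_nonneg) hlen
    (dist_pos.2 hab) (hf.mono (Icc_subset_Icc_right hσ.1.2)) hφ hφm.symm ?_ hψ
    (hψa.trans ha.symm) (hψb.trans hφb.symm)
  intro s hs t ht hst
  have hφt : φ t ∈ seg b c := by
    have := hφ.apply_mem_seg ht
    rw [hφm, hφb] at this
    exact htree.seg_subset_seg hσ.2 (left_mem_seg b c) this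
  have hsσ : s = σ := le_antisymm hs.2 (csInf_le ⟨0, fun t ht => ht.1.1⟩
    ⟨⟨hs.1, hs.2.trans hσ.1.2⟩, show f s ∈ seg b c from hst ▸ hφt⟩)
  subst hsσ
  exact ⟨rfl, (hφ.injOn (left_mem_Icc.2 (le_add_of_nonneg_right dist_nonneg)) ht
    (hφm.trans hst)).symm⟩

end IsRTree

section GromovProduct

variable {T : Type*} [MetricSpace T]

noncomputable def gromovProduct (p x y : T) : ℝ := (dist p x + dist p y - dist x y) / 2

lemma gromovProduct_nonneg (p x y : T) : 0 ≤ gromovProduct p x y := by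
  have := dist_triangle_left x y p
  unfold gromovProduct
  linarith

lemma continuous_gromovProduct_left (p y : T) : Continuous fun x => gromovProduct p x y := by
  unfold gromovProduct
  fun_prop

lemma gromovProduct_self_right (p x : T) : gromovProduct p x x = dist p x := by
  simp [gromovProduct]

lemma dist_le_gromovProduct_of_mem_seg {p x y m : T} (hx : m ∈ seg p x) (hy : m ∈ seg p y) :
    dist p m ≤ gromovProduct p x y := by
  have := dist_triangle x m y
  simp only [seg, mem_ofPred_eq] at hx hy
  unfold gromovProduct
  linarith [dist_comm x m]

lemma gromovProduct_eq_dist_of_mem_seg {p x y m : T} (hx : m ∈ seg p x) (hy : m ∈ seg p y)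
    (hxy : m ∈ seg x y) : gromovProduct p x y = dist p m := by
  simp only [seg, mem_ofPred_eq] at hx hy hxy
  unfold gromovProduct
  linarith [dist_comm x m]

end GromovProduct

namespace IsRTree

variable {T : Type*} [MetricSpace T] (htree : IsRTree T)
include htree

lemma min_gromovProduct_le (p x y w : T) :
    min (gromovProduct p x w) (gromovProduct p w y) ≤ gromovProduct p x y := by
  obtain ⟨m₁, hpx, hpw₁, hxw⟩ := htree.exists_median p x w
  obtain ⟨m₂, hpw₂, hpy, hwy⟩ := htree.exists_median p w y
  rw [gromovProduct_eq_dist_of_mem_seg hpx hpw₁ hxw,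
    gromovProduct_eq_dist_of_mem_seg hpw₂ hpy hwy]
  rcases le_total (dist p m₁) (dist p m₂) with h | h
  · have hpy₁ : m₁ ∈ seg p y :=
      seg_subset_seg_left hpy (htree.mem_seg_of_dist_le hpw₁ hpw₂ h)
    exact (min_le_left _ _).trans (dist_le_gromovProduct_of_mem_seg hpx hpy₁)
  · have hpx₂ : m₂ ∈ seg p x :=
      seg_subset_seg_left hpx (htree.mem_seg_of_dist_le hpw₂ hpw₁ h)
    exact (min_le_right _ _).trans (dist_le_gromovProduct_of_mem_seg hpx₂ hpy)

lemma isOpen_setOf_gromovProduct_eq_zero (p q : T) :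
    IsOpen {z | z ≠ p ∧ gromovProduct p z q = 0} := by
  refine Metric.isOpen_iff.2 fun z ⟨hzp, hz⟩ => ⟨dist z p, dist_pos.2 hzp, fun z' hz' => ?_⟩
  rw [mem_ball] at hz'
  have hzz' : 0 < gromovProduct p z z' := by
    unfold gromovProduct
    linarith [dist_comm z p, dist_comm z z', dist_nonneg (x := p) (y := z')]
  have := htree.min_gromovProduct_le p z q z'
  rw [hz, min_le_iff] at this
  refine ⟨fun h => by rw [h, dist_comm] at hz'; exact lt_irrefl _ hz', ?_⟩
  rcases this with h | h
  · exact absurd h hzz'.not_ge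
  · exact le_antisymm h (gromovProduct_nonneg p z' q)

lemma notMem_connectedComponentIn_of_mem_seg {p q r : T} (hqp : q ≠ p) (hp : p ∈ seg q r) :
    r ∉ connectedComponentIn {p}ᶜ q := by
  set U := {z | 0 < gromovProduct p z q}
  set V := {z | z ≠ p ∧ gromovProduct p z q = 0}
  have hsub : connectedComponentIn {p}ᶜ q ⊆ U ∪ V := fun z hz =>
    (gromovProduct_nonneg p z q).lt_or_eq.imp id fun h =>
      ⟨connectedComponentIn_subset _ _ hz, h.symm⟩
  have hdisj : Disjoint U V := disjoint_left.2 fun z hU hV => hU.ne' hV.2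
  have hqU : q ∈ U := by
    show 0 < gromovProduct p q q
    rw [gromovProduct_self_right]
    exact dist_pos.2 hqp.symm
  have hU := isPreconnected_connectedComponentIn.subset_left_of_subset_union
    (isOpen_lt continuous_const (continuous_gromovProduct_left p q))
    (htree.isOpen_setOf_gromovProduct_eq_zero p q) hdisj hsub
    ⟨q, mem_connectedComponentIn hqp, hqU⟩
  intro hr
  have hrU : 0 < gromovProduct p r q := hU hr
  simp only [seg, mem_ofPred_eq] at hp
  unfold gromovProduct at hrU
  linarith [dist_comm q p, dist_comm r q]

lemma exists_mem_seg_inter_of_mem_connectedComponentIn {p q r : T} (hqp : q ≠ p)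
    (hr : r ∈ connectedComponentIn {p}ᶜ q) :
    ∃ w, w ≠ p ∧ w ∈ seg p q ∧ w ∈ seg p r := by
  obtain ⟨m, hpq, hpr, hqr⟩ := htree.exists_median p q r
  refine ⟨m, fun hmp => ?_, hpq, hpr⟩
  exact htree.notMem_connectedComponentIn_of_mem_seg hqp (hmp ▸ hqr) hr

end IsRTree

section Covering

variable (G : Type*) {α : Type*} [SMul G α]

def CoveredByTranslates (J I : Set α) : Prop :=
  ∃ S : Set G, S.Finite ∧ I ⊆ ⋃ g ∈ S, g • J

variable {G} {J I I' : Set α}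

lemma CoveredByTranslates.mono (h : CoveredByTranslates G J I) (hI' : I' ⊆ I) :
    CoveredByTranslates G J I' :=
  let ⟨S, hS, hI⟩ := h
  ⟨S, hS, hI'.trans hI⟩

lemma coveredByTranslates_of_subset_smul {g : G} (h : I ⊆ g • J) : CoveredByTranslates G J I :=
  ⟨{g}, finite_singleton g, by simpa using h⟩

lemma CoveredByTranslates.union (h : CoveredByTranslates G J I) (h' : CoveredByTranslates G J I') :
    CoveredByTranslates G J (I ∪ I') := by
  obtain ⟨S, hS, hI⟩ := h
  obtain ⟨S', hS', hI'⟩ := h'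
  refine ⟨S ∪ S', hS.union hS', union_subset (hI.trans ?_) (hI'.trans ?_)⟩ <;>
    exact biUnion_mono (by simp) fun _ _ => subset_rfl

lemma coveredByTranslates_biUnion {ι : Type*} (t : Finset ι) {I : ι → Set α}
    (h : ∀ i ∈ t, CoveredByTranslates G J (I i)) :
    CoveredByTranslates G J (⋃ i ∈ t, I i) := by
  choose! S hS hI using h
  refine ⟨⋃ i ∈ t, S i, t.finite_toSet.biUnion hS,
    iUnion₂_subset fun i hi => (hI i hi).trans ?_⟩
  exact biUnion_mono (subset_biUnion_of_mem (u := S) hi) fun _ _ => subset_rfl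

lemma coveredByTranslates_iff_exists_fin [One G] :
    CoveredByTranslates G J I ↔
      ∃ (n : ℕ) (u : Fin (n + 1) → G), I ⊆ ⋃ i, u i • J := by
  constructor
  · rintro ⟨S, hS, hI⟩
    -- prepending `1` makes the list nonempty, as `Fin (n + 1)` requires
    let l := 1 :: hS.toFinset.toList
    refine ⟨hS.toFinset.toList.length, l.get, hI.trans (iUnion₂_subset fun g hg => ?_)⟩
    obtain ⟨i, rfl⟩ := List.mem_iff_get.1 (List.mem_cons_of_mem 1 (by simpa using hg) : g ∈ l)
    exact subset_iUnion (fun i => l.get i • J) i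
  · rintro ⟨n, u, hu⟩
    exact ⟨range u, finite_range u, hu.trans fun z hz => by
      obtain ⟨i, hi⟩ := mem_iUnion.1 hz
      exact mem_biUnion (mem_range_self i) hi⟩

end Covering

lemma Set.Infinite.exists_infinite_inter_of_subset_biUnion {ι α : Type*} {A : Set α} {S : Set ι}
    {B : ι → Set α} (hA : A.Infinite) (hS : S.Finite) (h : A ⊆ ⋃ i ∈ S, B i) :
    ∃ i ∈ S, (A ∩ B i).Infinite := by
  by_contra! hfin
  refine hA ((hS.biUnion hfin).subset fun a ha => ?_)
  obtain ⟨i, hi, hai⟩ := mem_iUnion₂.1 (h ha)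
  exact mem_biUnion hi ⟨ha, hai⟩

section IsometricAction

variable {G T : Type*} [Group G] [MetricSpace T] [MulAction G T] [IsIsometricSMul G T]

lemma smul_seg (g : G) (x y : T) : g • seg x y = seg (g • x) (g • y) := by
  ext z
  rw [mem_smul_set_iff_inv_smul_mem]
  simp only [seg, mem_ofPred_eq]
  rw [← dist_smul g x, ← dist_smul g _ y, smul_inv_smul, dist_smul]

end IsometricAction

lemma isMixing_iff_coveredByTranslates {N : ℕ} {T : Type*} [MetricSpace T] [MulAction (FN N) T] :
    IsMixing N T ↔
      ∀ I J : Set T, IsNondegSeg I → IsNondegSeg J → CoveredByTranslates (FN N) J I :=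
  forall₄_congr fun _ _ _ _ => coveredByTranslates_iff_exists_fin.symm

section FreeGroupAction

variable {N : ℕ} {T : Type*} [MetricSpace T] [MulAction (FN N) T] [IsIsometricSMul (FN N) T]

theorem IsMixing.hasArcDenseDirections (htree : IsRTree T) (hmix : IsMixing N T) :
    HasArcDenseDirections N T := by
  intro x y hyx J hJ
  obtain ⟨S, hS, hcov⟩ :=
    isMixing_iff_coveredByTranslates.1 hmix (seg x y) J ⟨x, y, hyx.symm, rfl⟩ hJ
  obtain ⟨a, b, -, rfl⟩ := hJ
  obtain ⟨δ, hδ, hball⟩ :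
      ∃ δ > 0, ball x δ ⊆ (⋃ g ∈ {g ∈ S | x ∉ g • seg a b}, g • seg a b)ᶜ := by
    refine Metric.isOpen_iff.1 ((hS.subset (sep_subset _ _)).isClosed_biUnion
      fun g _ => (isClosed_seg a b).smul g).isOpen_compl x ?_
    simp only [mem_compl_iff, mem_iUnion₂, mem_sep_iff, not_exists]
    exact fun g hg hxg => hg.2 hxg
  obtain ⟨f, hf, hx, hy⟩ := htree.exists_isGeodesicOn x y 0
  rw [zero_add] at hf hy
  have hD : 0 < dist x y := dist_pos.2 hyx.symm
  set A := f '' Ioo 0 (min δ (dist x y))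
  have hIoo : Ioo 0 (min δ (dist x y)) ⊆ Ioc 0 (dist x y) :=
    Ioo_subset_Ioc_self.trans (Ioc_subset_Ioc_right (min_le_right _ _))
  have hA : A.Infinite :=
    (Ioo_infinite (lt_min hδ hD)).image (hf.injOn.mono (hIoo.trans Ioc_subset_Icc_self))
  have hAd : A ⊆ connectedComponentIn {x}ᶜ y := by
    have := hf.image_Ioc_subset_connectedComponentIn hD
    rw [hx, hy] at this
    exact (image_mono hIoo).trans this
  have hAcov : A ⊆ ⋃ g ∈ {g ∈ S | x ∈ g • seg a b}, g • seg a b := by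
    rintro _ ⟨t, ht, rfl⟩
    have ht' : t ∈ Icc 0 (dist x y) := Ioc_subset_Icc_self (hIoo ht)
    obtain ⟨g, hg, hfg⟩ := mem_iUnion₂.1 (hcov (hx ▸ hy ▸ hf.apply_mem_seg ht'))
    refine mem_biUnion ⟨hg, ?_⟩ hfg
    by_contra hxg
    refine hball ?_ (mem_biUnion ⟨hg, hxg⟩ hfg)
    rw [mem_ball, dist_comm, ← hx, hf.dist_eq_sub (left_mem_Icc.2 hD.le) ht' ht'.1, sub_zero]
    exact ht.2.trans_le (min_le_left _ _)
  obtain ⟨g, ⟨-, hxg⟩, hAg⟩ :=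
    hA.exists_infinite_inter_of_subset_biUnion (hS.subset (sep_subset _ _)) hAcov
  refine ⟨g⁻¹, mem_smul_set_iff_inv_smul_mem.1 hxg, ?_⟩
  have := (hAg.image (MulAction.injective g⁻¹).injOn).nontrivial
  rw [image_smul, smul_set_inter, inv_smul_smul] at this
  exact this.mono (inter_subset_inter_left _ (smul_set_mono hAd))

namespace HasArcDenseDirections

variable (htree : IsRTree T) (had : HasArcDenseDirections N T) {J : Set T} (hJ : IsNondegSeg J)
include htree had hJ

lemma exists_seg_subset_smul {p q : T} (hqp : q ≠ p) :
    ∃ w ∈ seg p q, w ≠ p ∧ ∃ g : FN N, seg p w ⊆ g • J := by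
  obtain ⟨g, hgp, hnt⟩ := had p q hqp J hJ
  obtain ⟨z, ⟨hzd, hzJ⟩, -⟩ := hnt.exists_ne (g • p)
  obtain ⟨c, e, -, rfl⟩ := hJ
  have hr : g⁻¹ • z ∈ connectedComponentIn {p}ᶜ q := mem_smul_set_iff_inv_smul_mem.1 hzd
  obtain ⟨w, hwp, hwq, hwr⟩ := htree.exists_mem_seg_inter_of_mem_connectedComponentIn hqp hr
  refine ⟨w, hwq, hwp, g⁻¹, (seg_subset_seg_left hwr).trans ?_⟩
  calc seg p (g⁻¹ • z) = g⁻¹ • seg (g • p) z := by rw [smul_seg, inv_smul_smul]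
    _ ⊆ g⁻¹ • seg c e := smul_set_mono (htree.seg_subset_seg hgp hzJ)

lemma exists_coveredByTranslates_seg_inter_ball {p q : T} (hqp : q ≠ p) :
    ∃ ε > 0, CoveredByTranslates (FN N) J (seg p q ∩ ball p ε) := by
  obtain ⟨w, hwq, hwp, g, hw⟩ := had.exists_seg_subset_smul htree hJ hqp
  refine ⟨dist p w, dist_pos.2 hwp.symm, coveredByTranslates_of_subset_smul
    fun z ⟨hzq, hz⟩ => hw (htree.mem_seg_of_dist_le hzq hwq ?_)⟩
  rw [mem_ball, dist_comm] at hz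
  exact hz.le

lemma exists_coveredByTranslates_inter_ball {a b p : T} (hab : a ≠ b) (hp : p ∈ seg a b) :
    ∃ ε > 0, CoveredByTranslates (FN N) J (seg a b ∩ ball p ε) := by
  rcases eq_or_ne p a with rfl | hpa
  · exact had.exists_coveredByTranslates_seg_inter_ball htree hJ hab.symm
  rcases eq_or_ne p b with rfl | hpb
  · rw [seg_comm]
    exact had.exists_coveredByTranslates_seg_inter_ball htree hJ hab
  obtain ⟨ε₁, hε₁, h₁⟩ :=
    had.exists_coveredByTranslates_seg_inter_ball htree hJ hpa.symm
  obtain ⟨ε₂, hε₂, h₂⟩ :=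
    had.exists_coveredByTranslates_seg_inter_ball htree hJ hpb.symm
  refine ⟨min ε₁ ε₂, lt_min hε₁ hε₂, (h₁.union h₂).mono ?_⟩
  rintro z ⟨hz, hzp⟩
  rcases htree.seg_subset_union hp hz with hz' | hz'
  · exact Or.inl ⟨by rwa [seg_comm], ball_subset_ball (min_le_left _ _) hzp⟩
  · exact Or.inr ⟨hz', ball_subset_ball (min_le_right _ _) hzp⟩

end HasArcDenseDirections

theorem HasArcDenseDirections.isMixing (htree : IsRTree T) (had : HasArcDenseDirections N T) :
    IsMixing N T := by
  refine isMixing_iff_coveredByTranslates.2 fun I J hI hJ => ?_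
  obtain ⟨a, b, hab, rfl⟩ := hI
  choose! ε hε hcov using fun p (hp : p ∈ seg a b) =>
    had.exists_coveredByTranslates_inter_ball htree hJ hab hp
  obtain ⟨t, ht, hsub⟩ := (htree.isCompact_seg a b).elim_nhds_subcover
    (fun p => ball p (ε p)) fun p hp => ball_mem_nhds p (hε p hp)
  refine (coveredByTranslates_biUnion t fun p hp => hcov p (ht p hp)).mono fun z hz => ?_
  obtain ⟨p, hp, hzp⟩ := mem_iUnion₂.1 (hsub hz)
  exact mem_iUnion₂.2 ⟨p, hp, hz, hzp⟩

end FreeGroupAction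

theorem mixing_iff_arcDenseDirections_general
    (N : ℕ) (T : Type*) [MetricSpace T] [MulAction (FN N) T]
    (htree : IsRTree T) (hiso : IsIsometricAction N T) :
    IsMixing N T ↔ HasArcDenseDirections N T := by
  have : IsIsometricSMul (FN N) T := ⟨hiso⟩
  exact ⟨fun h => h.hasArcDenseDirections htree, fun h => h.isMixing htree⟩

/-- A minimal, very small isometric action of `F_N` on an ℝ-tree is mixing if and only if
it has arc-dense directions. -/
theorem mixing_iff_arcDenseDirections
    (N : ℕ) (hN : 2 ≤ N) (T : Type*) [MetricSpace T] [Nonempty T] [MulAction (FN N) T]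
    (htree : IsRTree T) (hiso : IsIsometricAction N T)
    (hvs : IsVerySmallAction N T) :
    IsMixing N T ↔ HasArcDenseDirections N T :=
  mixing_iff_arcDenseDirections_general N T htree hiso
end

section
/- Let T be a non-degenerate ℝ-tree (containing more than one point) with a minimal, very small action of the free group F_N (N ≥ 2) by isometries with dense orbits. Then the dual lamination L(T) is non-empty; in particular, for every ε > 0 there exists g ≠ 1 in F_N with ℓ_T(g) < ε. -/
open Pointwise MeasureTheory

/-
A non-degenerate ℝ-tree has no isolated points, so a dense orbit `F_N • x` meets every punctured
ball around `x`: there are `g ≠ 1` with `d(x, g x)`, hence `ℓ_T(g)`, arbitrarily small. Conjugating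
such a `g` to a cyclically reduced word `L` does not change `ℓ_T`, and the leaf `(L^{-∞}, L^∞)`
consists of two periodic words whose first letters differ, because `L` is cyclically reduced.
"First letters differ" is a closed condition that excludes the diagonal, so by compactness of
`∂F_N × ∂F_N` the nested closures of these small leaves have a common point, which lies in `L(T)`.
-/

open Filter Topology

namespace FreeGroup

variable {α : Type*} {L : List (α × Bool)}

theorem IsCyclicallyReduced.invRev [DecidableEq α] (h : IsCyclicallyReduced L) :
    IsCyclicallyReduced (invRev L) := by
  refine ⟨isReduced_iff_reduce_eq.2 (by rw [reduce_invRev, h.isReduced.reduce_eq]), ?_⟩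
  simp only [FreeGroup.invRev, List.getLast?_reverse, List.head?_reverse, List.head?_map,
    List.getLast?_map, Option.mem_def, Option.map_eq_some_iff]
  rintro _ ⟨b, hb, rfl⟩ _ ⟨a, ha, rfl⟩ hba
  simpa using (h.2 a ha b hb hba.symm).symm

theorem IsCyclicallyReduced.head?_ne_head?_invRev (h : IsCyclicallyReduced L) (hne : L ≠ []) :
    L.head? ≠ (FreeGroup.invRev L).head? := by
  simp only [FreeGroup.invRev, List.head?_reverse, List.getLast?_map,
    List.getLast?_eq_getLast_of_ne_nil hne, List.head?_eq_some_head hne, Option.map_some, ne_eq,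
    Option.some.injEq]
  intro hhead
  simpa [hhead] using h.2 _ (List.getLast?_eq_getLast_of_ne_nil hne) _ (List.head?_eq_some_head hne)

theorem exists_conj_isCyclicallyReduced [DecidableEq α] {g : FreeGroup α} (hg : g ≠ 1) :
    ∃ (u : FreeGroup α) (L : List (α × Bool)),
      IsCyclicallyReduced L ∧ L ≠ [] ∧ g = u * mk L * u⁻¹ := by
  have hg' : g = mk (reduceCyclically.conjugator g.toWord) * mk (reduceCyclically g.toWord) *
      (mk (reduceCyclically.conjugator g.toWord))⁻¹ := by
    rw [inv_mk, mul_mk, mul_mk, reduceCyclically.conj_conjugator_reduceCyclically, mk_toWord]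
  refine ⟨_, _, reduceCyclically.isCyclicallyReduced isReduced_toWord, fun hnil => hg ?_, hg'⟩
  rw [hg', hnil, ← one_eq_mk, mul_one, mul_inv_cancel]

theorem IsCyclicallyReduced.toWord_mk_pow [DecidableEq α] (h : IsCyclicallyReduced L) (n : ℕ) :
    (mk L ^ n).toWord = (List.replicate n L).flatten := by
  rw [pow_mk, toWord_mk, (h.flatten_replicate n).isReduced.reduce_eq]

theorem IsReduced.mk_ne_one [DecidableEq α] (h : IsReduced L) (hne : L ≠ []) : mk L ≠ 1 := by
  rwa [Ne, ← toWord_eq_nil_iff, toWord_mk, h.reduce_eq]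

theorem invRev_ne_nil (hne : L ≠ []) : invRev L ≠ [] := by
  simpa [invRev] using hne

end FreeGroup

theorem List.getElem?_flatten_replicate {α : Type*} {L : List α} {n i : ℕ}
    (hi : i < n * L.length) : (List.replicate n L).flatten[i]? = L[i % L.length]? := by
  induction n generalizing i with
  | zero => simp at hi
  | succ n ih =>
    rw [List.replicate_succ, List.flatten_cons]
    rcases Nat.lt_or_ge i L.length with hlt | hge
    · rw [List.getElem?_append_left hlt, Nat.mod_eq_of_lt hlt]
    · rw [List.getElem?_append_right hge, ih (by rw [Nat.succ_mul] at hi; omega),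
        ← Nat.mod_eq_sub_mod hge]

def periodicWord {α : Type*} (L : List α) (hne : L ≠ []) : ℕ → α :=
  fun i => L[i % L.length]'(Nat.mod_lt _ (List.length_pos_iff.2 hne))

theorem getElem?_flatten_replicate_eq_periodicWord {α : Type*} {L : List α} (hne : L ≠ [])
    {n i : ℕ} (hi : i < n * L.length) :
    (List.replicate n L).flatten[i]? = some (periodicWord L hne i) := by
  rw [List.getElem?_flatten_replicate hi, List.getElem?_eq_getElem]
  rfl

theorem head?_eq_some_periodicWord_zero {α : Type*} {L : List α} (hne : L ≠ []) :
    L.head? = some (periodicWord L hne 0) := by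
  rw [List.head?_eq_getElem?, List.getElem?_eq_getElem (List.length_pos_iff.2 hne)]
  rfl

theorem List.lt_mul_length_of_lt {α : Type*} {L : List α} (hne : L ≠ []) {n i : ℕ} (hi : i < n) :
    i < n * L.length :=
  lt_of_lt_of_le hi (Nat.le_mul_of_pos_right n (List.length_pos_iff.2 hne))

section Boundary

variable {N : ℕ} {L : List (Letter N)}

open FreeGroup

theorem isReducedWord_periodicWord (h : IsCyclicallyReduced L) (hne : L ≠ []) :
    IsReducedWord (periodicWord L hne) := by
  intro n hcancel
  -- letters `n` and `n + 1` of `L^∞` are adjacent letters of the reduced word `L^(n+2)`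
  obtain ⟨hn, hWn⟩ := List.getElem?_eq_some_iff.1 <|
    getElem?_flatten_replicate_eq_periodicWord hne
      (List.lt_mul_length_of_lt hne (by omega : n < n + 2))
  obtain ⟨hn1, hWn1⟩ := List.getElem?_eq_some_iff.1 <|
    getElem?_flatten_replicate_eq_periodicWord hne
      (List.lt_mul_length_of_lt hne (by omega : n + 1 < n + 2))
  have := List.isChain_iff_getElem.1 (h.flatten_replicate (n + 2)).isReduced n hn1
  rw [hWn, hWn1, hcancel] at this
  simp at this

def periodicBd (h : IsCyclicallyReduced L) (hne : L ≠ []) : Bd N :=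
  ⟨periodicWord L hne, isReducedWord_periodicWord h hne⟩

theorem limitsTo_mk_periodicBd (h : IsCyclicallyReduced L) (hne : L ≠ []) :
    limitsTo (mk L) (periodicBd h hne) := fun k =>
  ⟨k, fun n hn i hi => by
    rw [h.toWord_mk_pow]
    exact getElem?_flatten_replicate_eq_periodicWord hne (List.lt_mul_length_of_lt hne (by omega))⟩

theorem periodicBd_invRev_zero_ne (h : IsCyclicallyReduced L) (hne : L ≠ []) :
    (periodicBd h.invRev (invRev_ne_nil hne)).1 0 ≠ (periodicBd h hne).1 0 := by
  intro he
  apply h.head?_ne_head?_invRev hne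
  rw [head?_eq_some_periodicWord_zero hne, head?_eq_some_periodicWord_zero (invRev_ne_nil hne)]
  exact congrArg some he.symm

instance : CompactSpace (Bd N) := by
  refine isCompact_iff_compactSpace.1 (IsClosed.isCompact (s := {X | IsReducedWord X}) ?_)
  simp only [IsReducedWord, Set.ofPred_forall]
  exact isClosed_iInter fun n =>
    (isClosed_discrete {q : Letter N × Letter N | q.2 ≠ (q.1.1, !q.1.2)}).preimage
      (f := fun X : ℕ → Letter N => (X n, X (n + 1))) (by fun_prop)

theorem isClosed_setOf_head_ne : IsClosed {p : Bd N × Bd N | p.1.1 0 ≠ p.2.1 0} := by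
  have hhead : Continuous fun X : Bd N => X.1 0 := (continuous_apply 0).comp continuous_subtype_val
  exact (isClosed_discrete {q : Letter N × Letter N | q.1 ≠ q.2}).preimage
    ((hhead.comp continuous_fst).prodMk (hhead.comp continuous_snd))

end Boundary

theorem IsRTree.nhdsNE_neBot {T : Type*} [MetricSpace T] [Nontrivial T] (htree : IsRTree T)
    (x : T) : (𝓝[≠] x).NeBot := by
  rw [← mem_closure_iff_nhdsWithin_neBot, Metric.mem_closure_iff]
  intro ε hε
  obtain ⟨y, hy⟩ := exists_ne x
  obtain ⟨f, hf0, -, hf⟩ := htree.geodesic x y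
  set t := min (ε / 2) (dist x y)
  have ht : 0 < t := lt_min (half_pos hε) (dist_pos.2 hy.symm)
  have hdist : dist x (f t) = t := by
    simpa [hf0, abs_of_pos ht] using hf 0 ⟨le_rfl, dist_nonneg⟩ t ⟨ht.le, min_le_right _ _⟩
  refine ⟨f t, fun hx => ?_, ?_⟩
  · rw [Set.mem_singleton_iff.1 hx, dist_self] at hdist
    exact ht.ne hdist
  · rw [hdist]
    exact (min_le_left _ _).trans_lt (half_lt_self hε)

theorem Dense.exists_smul_ne_dist_lt {G T : Type*} [Group G] [MetricSpace T] [MulAction G T]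
    {x : T} (hx : Dense (MulAction.orbit G x)) [(𝓝[≠] x).NeBot] {ε : ℝ} (hε : 0 < ε) :
    ∃ g : G, g • x ≠ x ∧ dist x (g • x) < ε := by
  have hU : {x}ᶜ ∩ Metric.ball x ε ∈ 𝓝[≠] x := inter_mem_nhdsWithin _ (Metric.ball_mem_nhds x hε)
  obtain ⟨_, ⟨g, rfl⟩, hne, hball⟩ :=
    hx.exists_mem_open (isClosed_singleton.isOpen_compl.inter Metric.isOpen_ball)
      (Filter.nonempty_of_mem hU)
  exact ⟨g, hne, by rw [dist_comm]; exact hball⟩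

section TreeAction

variable {N : ℕ} {T : Type*} [MetricSpace T] [MulAction (FN N) T]

theorem translationLength_le_dist (g : FN N) (x : T) : translationLength N T g ≤ dist x (g • x) :=
  ciInf_le ⟨0, by rintro _ ⟨y, rfl⟩; exact dist_nonneg⟩ x

theorem translationLength_conj (hiso : IsIsometricAction N T) (u g : FN N) :
    translationLength N T (u * g * u⁻¹) = translationLength N T g := by
  unfold translationLength
  calc ⨅ x : T, dist x ((u * g * u⁻¹) • x) = ⨅ x : T, dist (u⁻¹ • x) (g • u⁻¹ • x) := by
        congr 1
        funext x
        rw [← (hiso u⁻¹).dist_eq]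
        simp [mul_smul]
    _ = ⨅ y : T, dist y (g • y) := (MulAction.toPerm u⁻¹).iInf_comp (g := fun y => dist y (g • y))

theorem exists_ne_one_translationLength_lt [Nontrivial T] (htree : IsRTree T)
    (hdense : HasDenseOrbits N T) {ε : ℝ} (hε : 0 < ε) :
    ∃ g : FN N, g ≠ 1 ∧ translationLength N T g < ε := by
  obtain ⟨x⟩ := (inferInstance : Nonempty T)
  have := htree.nhdsNE_neBot x
  obtain ⟨g, hgx, hlt⟩ := (hdense x).exists_smul_ne_dist_lt hε
  exact ⟨g, by rintro rfl; exact hgx (one_smul _ x), (translationLength_le_dist g x).trans_lt hlt⟩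

open FreeGroup in
theorem smallLeaves_inter_setOf_head_ne_nonempty (hiso : IsIsometricAction N T) {g : FN N}
    (hg : g ≠ 1) {ε : ℝ} (hε : translationLength N T g < ε) :
    (smallLeaves N T ε ∩ {p | p.1.1 0 ≠ p.2.1 0}).Nonempty := by
  obtain ⟨u, L, hL, hne, rfl⟩ := exists_conj_isCyclicallyReduced hg
  rw [translationLength_conj hiso] at hε
  refine ⟨(periodicBd hL.invRev (invRev_ne_nil hne), periodicBd hL hne),
    ⟨mk L, hL.isReduced.mk_ne_one hne, hε, ?_, limitsTo_mk_periodicBd hL hne⟩,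
    periodicBd_invRev_zero_ne hL hne⟩
  rw [inv_mk]
  exact limitsTo_mk_periodicBd hL.invRev (invRev_ne_nil hne)

end TreeAction

theorem nonempty_biInter_closure_of_monotone {X : Type*} [TopologicalSpace X] [CompactSpace X]
    {A : ℝ → Set X} (hA : Monotone A) (hne : ∀ ε, 0 < ε → (A ε).Nonempty) :
    (⋂ ε ∈ Set.Ioi (0 : ℝ), closure (A ε)).Nonempty := by
  have : Nonempty (Set.Ioi (0 : ℝ)) := ⟨⟨1, Set.mem_Ioi.2 one_pos⟩⟩
  rw [Set.biInter_eq_iInter]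
  exact IsCompact.nonempty_iInter_of_directed_nonempty_isCompact_isClosed _
    (Monotone.directed_ge fun i j hij => closure_mono (hA (Subtype.mono_coe _ hij)))
    (fun i => (hne i i.2).closure) (fun _ => isClosed_closure.isCompact) (fun _ => isClosed_closure)

theorem smallLeaves_mono {N : ℕ} (T : Type*) [MetricSpace T] [MulAction (FN N) T] :
    Monotone (smallLeaves N T) := fun _ _ hle _ ⟨g, hg, hlt, hinv, hpos⟩ =>
  ⟨g, hg, hlt.trans_le hle, hinv, hpos⟩

theorem dualLamination_nonempty_general
    (N : ℕ) (T : Type*) [MetricSpace T] [MulAction (FN N) T]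
    (hnd : ∃ x y : T, x ≠ y)
    (htree : IsRTree T) (hiso : IsIsometricAction N T)
    (hdense : HasDenseOrbits N T) :
    (dualLamination N T).Nonempty ∧
    ∀ ε : ℝ, 0 < ε → ∃ g : FN N, g ≠ 1 ∧ translationLength N T g < ε := by
  have : Nontrivial T := ⟨hnd⟩
  have hsmall : ∀ ε : ℝ, 0 < ε → ∃ g : FN N, g ≠ 1 ∧ translationLength N T g < ε :=
    fun ε hε => exists_ne_one_translationLength_lt htree hdense hε
  refine ⟨?_, hsmall⟩
  obtain ⟨p, hp⟩ := nonempty_biInter_closure_of_monotone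
    (fun _ _ hle => Set.inter_subset_inter_left _ (smallLeaves_mono T hle))
    (fun ε hε => let ⟨g, hg, hlt⟩ := hsmall ε hε
      smallLeaves_inter_setOf_head_ne_nonempty hiso hg hlt)
  rw [Set.mem_iInter₂] at hp
  have hhead : p.1.1 0 ≠ p.2.1 0 :=
    closure_minimal Set.inter_subset_right isClosed_setOf_head_ne (hp 1 (Set.mem_Ioi.2 one_pos))
  exact ⟨p, fun hdiag => hhead (by rw [hdiag]),
    Set.mem_iInter₂.2 fun ε hε => closure_mono Set.inter_subset_left (hp ε hε)⟩

/-- For a non-degenerate ℝ-tree with a minimal, very small action of `F_N` by isometries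
with dense orbits, the dual lamination `L(T)` is non-empty; in particular, for every `ε > 0`
there is `g ≠ 1` with `ℓ_T(g) < ε`. -/
theorem dualLamination_nonempty
    (N : ℕ) (hN : 2 ≤ N) (T : Type*) [MetricSpace T] [Nonempty T] [MulAction (FN N) T]
    (hnd : ∃ x y : T, x ≠ y)
    (htree : IsRTree T) (hiso : IsIsometricAction N T)
    (hvs : IsVerySmallAction N T) (hdense : HasDenseOrbits N T) :
    (dualLamination N T).Nonempty ∧
    ∀ ε : ℝ, 0 < ε → ∃ g : FN N, g ≠ 1 ∧ translationLength N T g < ε :=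
  dualLamination_nonempty_general N T hnd htree hiso hdense
end
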